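/- Let s be a signed measure on a measurable space (α, 𝒜) and let g : α → ℝ be measurable, nonnegative, and |s|-integrable. Then the set of all values ∫ h ds, where h ranges over all measurable functions h : α → ℝ with |h(a)| ≤ g(a) for all a ∈ α, is exactly the closed interval [−∫ g d|s|, ∫ g d|s|]. -/

import Mathlib

open MeasureTheory

/-- The integral of a real function against a signed measure `s`, defined via the
Jordan decomposition `s = s⁺ − s⁻` as `∫ f ds⁺ − ∫ f ds⁻`. -/
noncomputable def signedIntegral {α : Type*} [MeasurableSpace α]
    (s : SignedMeasure α) (f : α → ℝ) : ℝ :=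
  (∫ a, f a ∂s.toJordanDecomposition.posPart) - ∫ a, f a ∂s.toJordanDecomposition.negPart

/-!
Since `|s| = s⁺ + s⁻`, the triangle inequality gives `|∫ h ds| ≤ ∫ |h| d|s| ≤ ∫ g d|s|`.
Conversely, let `σ = ±1` be the sign of a Hahn decomposition, i.e. `σ = 1` `s⁺`-a.e. and
`σ = -1` `s⁻`-a.e.; then `∫ σ g ds = ∫ g d|s|`, so `c σ g` with `|c| ≤ 1` realises every value
`c ∫ g d|s|` of the interval.
-/

namespace MeasureTheory.SignedMeasure

variable {α : Type*} [MeasurableSpace α] (s : SignedMeasure α)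

lemma integrable_posPart_of_integrable_totalVariation {f : α → ℝ}
    (hf : Integrable f s.totalVariation) : Integrable f s.toJordanDecomposition.posPart :=
  (integrable_add_measure.mp hf).1

lemma integrable_negPart_of_integrable_totalVariation {f : α → ℝ}
    (hf : Integrable f s.totalVariation) : Integrable f s.toJordanDecomposition.negPart :=
  (integrable_add_measure.mp hf).2

lemma integral_totalVariation {f : α → ℝ} (hf : Integrable f s.totalVariation) :
    ∫ a, f a ∂s.totalVariation =
      (∫ a, f a ∂s.toJordanDecomposition.posPart) + ∫ a, f a ∂s.toJordanDecomposition.negPart :=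
  integral_add_measure (s.integrable_posPart_of_integrable_totalVariation hf)
    (s.integrable_negPart_of_integrable_totalVariation hf)

lemma signedIntegral_const_mul (c : ℝ) (f : α → ℝ) :
    signedIntegral s (fun a => c * f a) = c * signedIntegral s f := by
  simp only [signedIntegral, integral_const_mul, mul_sub]

lemma abs_signedIntegral_le_integral_abs {f : α → ℝ} (hf : Integrable f s.totalVariation) :
    |signedIntegral s f| ≤ ∫ a, |f a| ∂s.totalVariation := by
  rw [s.integral_totalVariation hf.abs]
  calc |signedIntegral s f|
      ≤ |∫ a, f a ∂s.toJordanDecomposition.posPart| +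
          |∫ a, f a ∂s.toJordanDecomposition.negPart| := abs_sub _ _
    _ ≤ _ := add_le_add abs_integral_le_integral_abs abs_integral_le_integral_abs

open Classical in
/-- The sign of a Hahn decomposition: `1` off a set carrying `s⁻`, `-1` on it. -/
noncomputable def hahnSign (a : α) : ℝ :=
  if a ∈ s.toJordanDecomposition.mutuallySingular.nullSet then -1 else 1

lemma measurable_hahnSign : Measurable s.hahnSign :=
  measurable_const.ite s.toJordanDecomposition.mutuallySingular.measurableSet_nullSet
    measurable_const

lemma abs_hahnSign (a : α) : |s.hahnSign a| = 1 := by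
  unfold hahnSign
  split_ifs <;> simp

lemma hahnSign_ae_eq_one_posPart : s.hahnSign =ᵐ[s.toJordanDecomposition.posPart] 1 := by
  filter_upwards [measure_eq_zero_iff_ae_notMem.mp
    s.toJordanDecomposition.mutuallySingular.measure_nullSet] with a ha
  simp [hahnSign, ha]

lemma hahnSign_ae_eq_neg_one_negPart : s.hahnSign =ᵐ[s.toJordanDecomposition.negPart] -1 := by
  filter_upwards [measure_eq_zero_iff_ae_notMem.mp
    s.toJordanDecomposition.mutuallySingular.measure_compl_nullSet] with a ha
  simp [hahnSign, Set.not_notMem.mp ha]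

lemma signedIntegral_hahnSign_mul {f : α → ℝ} (hf : Integrable f s.totalVariation) :
    signedIntegral s (fun a => s.hahnSign a * f a) = ∫ a, f a ∂s.totalVariation := by
  have hpos : (fun a => s.hahnSign a * f a) =ᵐ[s.toJordanDecomposition.posPart] f := by
    filter_upwards [s.hahnSign_ae_eq_one_posPart] with a ha
    simp [ha]
  have hneg : (fun a => s.hahnSign a * f a) =ᵐ[s.toJordanDecomposition.negPart] -f := by
    filter_upwards [s.hahnSign_ae_eq_neg_one_negPart] with a ha
    simp [ha]
  rw [signedIntegral, integral_congr_ae hpos, integral_congr_ae hneg, s.integral_totalVariation hf,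
    Pi.neg_def, integral_neg, sub_neg_eq_add]

end MeasureTheory.SignedMeasure

/-- For `g ≥ 0` measurable and `|s|`-integrable, the set of values `∫ h ds` over
measurable `h` with `|h| ≤ g` pointwise is exactly the closed interval
`[−∫ g d|s|, ∫ g d|s|]`. -/
theorem signedIntegral_range_eq_Icc_weighted {α : Type*} [MeasurableSpace α]
    (s : SignedMeasure α) (g : α → ℝ) (hg_meas : Measurable g)
    (hg_nonneg : ∀ a, 0 ≤ g a) (hg_int : Integrable g s.totalVariation) :
    {r : ℝ | ∃ h : α → ℝ, Measurable h ∧ (∀ a, |h a| ≤ g a) ∧ signedIntegral s h = r}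
      = Set.Icc (-(∫ a, g a ∂s.totalVariation)) (∫ a, g a ∂s.totalVariation) := by
  set I := ∫ a, g a ∂s.totalVariation
  ext r
  constructor
  · rintro ⟨h, hh_meas, hh_le, rfl⟩
    have hh_int : Integrable h s.totalVariation :=
      hg_int.mono' hh_meas.aestronglyMeasurable (.of_forall hh_le)
    exact abs_le.mp <| (s.abs_signedIntegral_le_integral_abs hh_int).trans
      (integral_mono hh_int.abs hg_int hh_le)
  · rintro ⟨hr_ge, hr_le⟩
    -- `r / I` is the junk value `0` when `I = 0`, which is harmless since then `r = 0`.
    have hc : |r / I| ≤ 1 := by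
      rw [abs_div]
      exact div_le_one_of_le₀ ((abs_le.mpr ⟨hr_ge, hr_le⟩).trans (le_abs_self I)) (abs_nonneg I)
    refine ⟨fun a => r / I * (s.hahnSign a * g a),
      measurable_const.mul (s.measurable_hahnSign.mul hg_meas), fun a => ?_, ?_⟩
    · rw [abs_mul, abs_mul, s.abs_hahnSign, one_mul, abs_of_nonneg (hg_nonneg a)]
      exact mul_le_of_le_one_left (hg_nonneg a) hc
    · rw [s.signedIntegral_const_mul, s.signedIntegral_hahnSign_mul hg_int]
      exact div_mul_cancel_of_imp fun hI => by linarith
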